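/- (Identification of the group-time geodesic ATT using a not-yet-treated group.) Fix a group g and a time t with 1 ≤ g − δ ≤ t ≤ T − δ, g − δ − 1 ≥ 0, and t + δ strictly before the last treatment time of any unit in the comparison set. Let B = {D_{t+δ} = 0} ∩ {G ≠ g} be the not-yet-treated comparison event, with P(B) > 0. Suppose: (a) (irreversibility) D_0 = 0 and D_{s−1} = 1 implies D_s = 1 almost surely, so that on B one has D_s = 0 for all s ≤ t + δ; (b) Y_s = Y_s(0) P-almost surely on {D_s = 0}, and Y_s = Y_s(g) P-almost surely on {G = g}; (c) all conditional Fréchet means appearing below exist and are unique; (d) (limited anticipation) m(Y_s(g)|G = g) = m(Y_s(0)|G = g) for all s < g − δ; (e) (parallel trends) for every s with g − δ ≤ s ≤ t, Γ_{m(Y_{s−1}(0)|B), m(Y_s(0)|B)}(m(Y_{s−1}(0)|G = g)) = m(Y_s(0)|G = g). Define β_{g−δ−1} = m(Y_{g−δ−1} | G = g) and recursively β_s = Γ_{m(Y_{s−1}|B), m(Y_s|B)}(β_{s−1}) for s = g − δ, …, t. Then β_t = m(Y_t(0) | G = g) and m(Y_t | G = g) = m(Y_t(g) | G = g); hence the group-time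 geodesic ATT τ(g,t) = γ_{m(Y_t(0)|G=g), m(Y_t(g)|G=g)} equals γ_{β_t, m(Y_t|G=g)}. -/
import Mathlib


open MeasureTheory

/-- `ν` is the (unique) conditional Fréchet mean of `Z : Ω → M` given the event `E`:
it is the unique minimizer over `ω ∈ M` of `∫_E d(Z,ω)² dP`. -/
def IsCondFrechetMean {Ω M : Type*} [MetricSpace M] [MeasurableSpace Ω]
    (P : Measure Ω) (E : Set Ω) (Z : Ω → M) (ν : M) : Prop :=
  ∀ ω : M, ω ≠ ν → (∫ x in E, dist (Z x) ν ^ 2 ∂P) < ∫ x in E, dist (Z x) ω ^ 2 ∂P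


lemma frechet_mean_congr {Ω M : Type*} [MetricSpace M] [MeasurableSpace Ω]
    (P : Measure Ω) {E : Set Ω} (hE : MeasurableSet E) {Z₁ Z₂ : Ω → M}
    (h : ∀ᵐ x ∂P, x ∈ E → Z₁ x = Z₂ x) {ν₁ ν₂ : M}
    (h₁ : IsCondFrechetMean P E Z₁ ν₁) (h₂ : IsCondFrechetMean P E Z₂ ν₂) :
    ν₁ = ν₂ := by
  have key : ∀ ω : M, (∫ x in E, dist (Z₁ x) ω ^ 2 ∂P) = ∫ x in E, dist (Z₂ x) ω ^ 2 ∂P := by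
    intro ω
    refine integral_congr_ae ?_
    exact (ae_restrict_iff' hE).2 (h.mono fun x hx hxE => by simp only [hx hxE])
  by_contra hne
  have A := h₁ ν₂ (Ne.symm hne)
  have B := h₂ ν₁ hne
  rw [key ν₁, key ν₂] at A
  linarith

/-- Identification of the group-time geodesic ATT using a not-yet-treated group.
With `B = {D_{t+δ} = 0} ∩ {G ≠ g}` the not-yet-treated comparison event, under
irreversibility of treatment (a), consistency (b), uniqueness of conditional
Fréchet means (c), limited anticipation (d), and geodesic parallel trends (e),
the recursion `β_{g－δ－1} = m(Y_{g-δ-1}|G=g)`,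
`β_s = Γ_{m(Y_{s-1}|B), m(Y_s|B)}(β_{s-1})` yields `β_t = m(Y_t(0)|G=g)` and
`m(Y_t|G=g) = m(Y_t(g)|G=g)`, so the group-time geodesic ATT
`τ(g,t) = γ_{m(Y_t(0)|G=g), m(Y_t(g)|G=g)}` equals `γ_{β_t, m(Y_t|G=g)}`. -/
theorem staggered_geodesic_did_identification_not_yet_treated
    {Ω M : Type*} [MetricSpace M] [MeasurableSpace Ω]
    (P : Measure Ω) [IsProbabilityMeasure P]
    (Γ : M → M → M → M)
    (T δ g t : ℕ)
    (hδg : δ + 1 ≤ g) (hgt : g - δ ≤ t) (htT : t + δ ≤ T)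
    (D : ℕ → Ω → Bool) (hD : ∀ s, Measurable (D s))
    (G : Ω → ℕ∞) (hG : Measurable G)
    -- G is the first time s with D_s = 1 (G = ∞ if never treated)
    (hGdef : ∀ᵐ x ∂P, ∀ s ≤ T, (D s x = true ↔ (G x) ≤ (s : ℕ∞)))
    (hGrange : ∀ x, G x = ⊤ ∨ ∃ s : ℕ, 1 ≤ s ∧ s ≤ T ∧ G x = (s : ℕ∞))
    -- t + δ is strictly before the treatment time of any unit in the comparison set
    (hcompare : ∀ x, (D (t + δ) x = false ∧ G x ≠ (g : ℕ∞)) → ((t + δ : ℕ) : ℕ∞) < G x)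
    (hPg : P {x | G x = (g : ℕ∞)} ≠ 0)
    (hPB : P {x | D (t + δ) x = false ∧ G x ≠ (g : ℕ∞)} ≠ 0)
    (Y Yp Yg : ℕ → Ω → M)   -- observed outcomes Y_s, potential Y_s(0), potential Y_s(g)
    -- (a) irreversibility of treatment
    (hirrev : ∀ᵐ x ∂P, D 0 x = false ∧
      ∀ s, 1 ≤ s → s ≤ T → D (s - 1) x = true → D s x = true)
    -- (b) consistency: a.s. on {D_s = 0}, Y_s = Y_s(0); a.s. on {G = g}, Y_s = Y_s(g)
    (hb0 : ∀ s ≤ T, ∀ᵐ x ∂P, D s x = false → Y s x = Yp s x)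
    (hbg : ∀ s ≤ T, ∀ᵐ x ∂P, G x = (g : ℕ∞) → Y s x = Yg s x)
    -- (c) all conditional Fréchet means exist and are unique
    (mYB mYG mYpB mYpG mYgG : ℕ → M)
    (hmYB : ∀ s ≤ T, IsCondFrechetMean P
      {x | D (t + δ) x = false ∧ G x ≠ (g : ℕ∞)} (Y s) (mYB s))
    (hmYG : ∀ s ≤ T, IsCondFrechetMean P {x | G x = (g : ℕ∞)} (Y s) (mYG s))
    (hmYpB : ∀ s ≤ T, IsCondFrechetMean P
      {x | D (t + δ) x = false ∧ G x ≠ (g : ℕ∞)} (Yp s) (mYpB s))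
    (hmYpG : ∀ s ≤ T, IsCondFrechetMean P {x | G x = (g : ℕ∞)} (Yp s) (mYpG s))
    (hmYgG : ∀ s ≤ T, IsCondFrechetMean P {x | G x = (g : ℕ∞)} (Yg s) (mYgG s))
    -- (d) limited anticipation
    (hanticip : ∀ s, s < g - δ → mYgG s = mYpG s)
    -- (e) parallel trends based on the not-yet-treated group
    (hpt : ∀ s, g - δ ≤ s → s ≤ t → Γ (mYpB (s - 1)) (mYpB s) (mYpG (s - 1)) = mYpG s)
    -- the recursively defined β
    (β : ℕ → M)
    (hβ₀ : β (g - δ - 1) = mYG (g - δ - 1))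
    (hβrec : ∀ s, g - δ ≤ s → s ≤ t → β s = Γ (mYB (s - 1)) (mYB s) (β (s - 1))) :
    β t = mYpG t ∧ mYG t = mYgG t := by
  have htT' : t ≤ T := le_trans (Nat.le_add_right t δ) htT
  have hBmeas : MeasurableSet {x | D (t + δ) x = false ∧ G x ≠ (g : ℕ∞)} := by
    have h1 : MeasurableSet {x | D (t + δ) x = false} :=
      hD (t + δ) (measurableSet_singleton false)
    have h2 : MeasurableSet {x | G x = (g : ℕ∞)} := hG (measurableSet_singleton _)
    exact h1.inter h2.compl
  have hGmeas : MeasurableSet {x | G x = (g : ℕ∞)} := hG (measurableSet_singleton _)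
  -- on B, Y s = Yp s a.e. for s ≤ t + δ, hence the Fréchet means coincide
  have eqB : ∀ s, s ≤ t + δ → mYB s = mYpB s := by
    intro s hs
    refine frechet_mean_congr P hBmeas ?_ (hmYB s (by omega)) (hmYpB s (by omega))
    filter_upwards [hb0 s (by omega), hGdef] with x hx hGx hxB
    obtain ⟨hDx, hGne⟩ := hxB
    have hlt : ((t + δ : ℕ) : ℕ∞) < G x := hcompare x ⟨hDx, hGne⟩
    have hDs : D s x = false := by
      by_contra hc
      have hDtrue : D s x = true := by
        cases hD' : D s x with
        | false => exact absurd hD' hc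
        | true => rfl
      have hle : G x ≤ (s : ℕ∞) := (hGx s (by omega)).1 hDtrue
      have : ((s : ℕ∞)) ≤ ((t + δ : ℕ) : ℕ∞) := by exact_mod_cast hs
      exact absurd (lt_of_le_of_lt (hle.trans this) hlt) (lt_irrefl _)
    exact hx hDs
  -- on {G = g}, Y s = Yg s a.e., hence the Fréchet means coincide
  have eqG : ∀ s, s ≤ T → mYG s = mYgG s := by
    intro s hs
    exact frechet_mean_congr P hGmeas (hbg s hs) (hmYG s hs) (hmYgG s hs)
  -- the recursion
  have hmain : ∀ s, g - δ - 1 ≤ s → s ≤ t → β s = mYpG s := by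
    intro s hs
    induction s, hs using Nat.le_induction with
    | base =>
      intro _
      rw [hβ₀, eqG _ (by omega), hanticip _ (by omega)]
    | succ s hs ih =>
      intro hst
      have hs1 : g - δ ≤ s + 1 := by omega
      rw [hβrec (s + 1) hs1 hst]
      have hβs : β s = mYpG s := ih (by omega)
      have hsimp : s + 1 - 1 = s := by omega
      rw [hsimp, eqB s (by omega), eqB (s + 1) (by omega), hβs]
      have := hpt (s + 1) hs1 hst
      rwa [hsimp] at this
  exact ⟨hmain t (by omega) le_rfl, eqG t (by omega)⟩
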